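/- A standard permutation π of {±1,...,±n} is sign-connected if and only if for all m < 2n, the partial sum π(1)+π(2)+...+π(m) > 0. -/

import Mathlib

/-- A sequence `π` lists each element of `{±1, …, ±n}` exactly once among
positions `0, …, 2n-1`. -/
def IsSgnPerm (n : ℕ) (π : ℕ → ℤ) : Prop :=
  (Finset.range (2*n)).image π = (Finset.Icc (-(n:ℤ)) (n:ℤ)).erase 0

/-- A standard permutation of `{±1, …, ±n}`: each `i` appears before `-i`, and
the negative entries appear in the order `-1, -2, …, -n`. -/
def IsStdPerm (n : ℕ) (π : ℕ → ℤ) : Prop :=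
  IsSgnPerm n π ∧
  (∀ k l, k < 2*n → l < 2*n → 0 < π k → π l = -π k → k < l) ∧
  (∀ k l, k < 2*n → l < 2*n → π k < 0 → π l < 0 → (k < l ↔ π l < π k))

/-- Sign-connectedness: every proper nonempty initial segment contains exactly
one element of some pair `{j, -j}`. -/
def SignConnected (n : ℕ) (π : ℕ → ℤ) : Prop :=
  ∀ m, 1 ≤ m → m < 2*n → ∃ j : ℤ, 1 ≤ j ∧ j ≤ n ∧
    Xor' (∃ i < m, π i = j) (∃ i < m, π i = -j)


/-!
In a standard permutation every negative entry `-j` is preceded by `j`, so the entries of an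
initial segment that are not cancelled by their negatives are all positive. Hence the partial sum,
which equals the sum of these uncancelled entries, is positive exactly when some pair `{j, -j}` is
split by the segment.
-/

open Finset

namespace Finset

variable {G : Type*} [AddCommGroup G] [LinearOrder G] [IsOrderedAddMonoid G]

theorem sum_eq_sum_filter_neg_notMem (A : Finset G) :
    ∑ x ∈ A, x = ∑ x ∈ A with -x ∉ A, x := by
  have hpaired : ∑ x ∈ A with -x ∈ A, x = 0 :=
    sum_involution (fun a _ => -a) (fun _ _ => add_neg_cancel _)
      (fun _ _ h => neg_ne_self.mpr h)
      (fun a ha => by simp only [mem_filter, neg_neg] at ha ⊢; exact ha.symm)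
      (fun a _ => neg_neg a)
  rw [← sum_filter_add_sum_filter_not A (fun x => -x ∈ A), hpaired, zero_add]

theorem sum_pos_iff_exists_neg_notMem {A : Finset G} (hA : ∀ x ∈ A, -x ∉ A → 0 < x) :
    0 < ∑ x ∈ A, x ↔ ∃ x ∈ A, -x ∉ A := by
  rw [sum_eq_sum_filter_neg_notMem]
  constructor
  · intro hpos
    obtain ⟨x, hx⟩ := nonempty_of_sum_ne_zero hpos.ne'
    exact ⟨x, (mem_filter.mp hx).1, (mem_filter.mp hx).2⟩
  · rintro ⟨x, hxA, hx⟩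
    exact sum_pos (fun y hy => hA y (mem_filter.mp hy).1 (mem_filter.mp hy).2)
      ⟨x, mem_filter.mpr ⟨hxA, hx⟩⟩

end Finset

theorem exists_xor_mem_neg_mem_iff {n : ℤ} {A : Finset ℤ} (hA : ∀ x ∈ A, -x ∉ A → 0 < x)
    (hle : ∀ x ∈ A, x ≤ n) :
    (∃ j : ℤ, 1 ≤ j ∧ j ≤ n ∧ Xor (j ∈ A) (-j ∈ A)) ↔ ∃ x ∈ A, -x ∉ A := by
  constructor
  · rintro ⟨j, hj, -, ⟨hjA, hnjA⟩ | ⟨hnjA, hjA⟩⟩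
    · exact ⟨j, hjA, hnjA⟩
    · exact absurd (hA (-j) hnjA (by rwa [neg_neg])) (by omega)
  · rintro ⟨x, hxA, hx⟩
    exact ⟨x, hA x hxA hx, hle x hxA, Or.inl ⟨hxA, hx⟩⟩

namespace IsSgnPerm

variable {n : ℕ} {π : ℕ → ℤ}

theorem injOn (h : IsSgnPerm n π) : Set.InjOn π (range (2 * n)) := by
  apply injOn_of_card_image_eq
  rw [h, card_range]
  rcases Nat.eq_zero_or_pos n with rfl | hn
  · simp
  · rw [card_erase_of_mem (by simp), Int.card_Icc]
    omega

theorem mem_Icc_erase_zero (h : IsSgnPerm n π) {m : ℕ} (hm : m ≤ 2 * n) {x : ℤ}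
    (hx : x ∈ (range m).image π) : x ∈ (Icc (-(n : ℤ)) n).erase 0 :=
  h ▸ image_subset_image (range_subset_range.mpr hm) hx

theorem exists_apply_eq (h : IsSgnPerm n π) {x : ℤ} (hx : x ∈ (Icc (-(n : ℤ)) n).erase 0) :
    ∃ i < 2 * n, π i = x := by
  have himage : (range (2 * n)).image π = _ := h
  simpa only [← himage, mem_image, mem_range] using hx

theorem sum_range_eq_sum_image (h : IsSgnPerm n π) {m : ℕ} (hm : m ≤ 2 * n) :
    ∑ i ∈ range m, π i = ∑ x ∈ (range m).image π, x :=
  (sum_image (f := fun x => x) fun _ hi _ hj => h.injOn (range_subset_range.mpr hm hi)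
    (range_subset_range.mpr hm hj)).symm

end IsSgnPerm

namespace IsStdPerm

variable {n : ℕ} {π : ℕ → ℤ}

theorem exists_lt_eq_neg (h : IsStdPerm n π) {i : ℕ} (hi : i < 2 * n) (hneg : π i < 0) :
    ∃ l < i, π l = -π i := by
  have hmem := h.1.mem_Icc_erase_zero le_rfl (mem_image_of_mem π (mem_range.mpr hi))
  simp only [mem_erase, mem_Icc] at hmem
  obtain ⟨l, hl, hlx⟩ := h.1.exists_apply_eq (x := -π i)
    (by simp only [mem_erase, mem_Icc]; omega)
  exact ⟨l, h.2.1 l i hl hi (by omega) (by omega), hlx⟩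

theorem pos_of_neg_notMem_image_range (h : IsStdPerm n π) {m : ℕ} (hm : m ≤ 2 * n) {x : ℤ}
    (hx : x ∈ (range m).image π) (hnx : -x ∉ (range m).image π) : 0 < x := by
  have hx0 := (mem_erase.mp (h.1.mem_Icc_erase_zero hm hx)).1
  obtain ⟨i, hi, rfl⟩ := mem_image.mp hx
  by_contra! hnonpos
  obtain ⟨l, hl, hlx⟩ := h.exists_lt_eq_neg ((mem_range.mp hi).trans_le hm)
    (lt_of_le_of_ne hnonpos hx0)
  exact hnx (mem_image.mpr ⟨l, mem_range.mpr (hl.trans (mem_range.mp hi)), hlx⟩)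

end IsStdPerm

theorem stmt_0 (n : ℕ) (π : ℕ → ℤ) (hπ : IsStdPerm n π) :
    SignConnected n π ↔ ∀ m, 1 ≤ m → m < 2*n → 0 < ∑ i ∈ Finset.range m, π i := by
  refine forall_congr' fun m => forall_congr' fun _ => forall_congr' fun hm => ?_
  have hunpaired := fun x => hπ.pos_of_neg_notMem_image_range hm.le (x := x)
  have hle : ∀ x ∈ (range m).image π, x ≤ n := fun x hx =>
    (mem_Icc.mp (mem_of_mem_erase (hπ.1.mem_Icc_erase_zero hm.le hx))).2
  simp only [← mem_range, ← mem_image]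
  rw [hπ.1.sum_range_eq_sum_image hm.le, sum_pos_iff_exists_neg_notMem hunpaired]
  exact exists_xor_mem_neg_mem_iff hunpaired hle
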